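/- Under an automorphism of the nilpotent complex structure given by a matrix σ of the form σ = [[σ¹₁, σ²₁, σ³₁],[σ¹₂, σ²₂, σ³₂],[0,0,σ³₃]] (with τ^j = Σ_k σ^j_k ω^k), the invariants transform as Δ₁(τ) = Δ₁(ω)·|Δ'|²·(σ³₃)² and Δ₂(τ) = Δ₂(ω)·|Δ'|²·|σ³₃|², where Δ' is determined by τ¹∧τ² = Δ'·ω¹∧ω². Consequently the sign of Δ₂² - |Δ₁|² is invariant, and Δ₂/|Δ₁| is invariant whenever Δ₁ ≠ 0. -/

import Mathlib

open ExteriorAlgebra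

/-- The 2-form `dω³` determined by the structure equations. -/
noncomputable def dOmega3 {V : Type*} [AddCommGroup V] [Module ℂ V]
    (ω1 ω2 bω1 bω2 : V) (ρ A B C D : ℂ) : ExteriorAlgebra ℂ V :=
  ρ • (ι ℂ ω1 * ι ℂ ω2) + A • (ι ℂ ω1 * ι ℂ bω1) + B • (ι ℂ ω1 * ι ℂ bω2) +
    C • (ι ℂ ω2 * ι ℂ bω1) + D • (ι ℂ ω2 * ι ℂ bω2)

/-- The conjugate 2-form `dω̄³`. -/
noncomputable def dOmegaBar3 {V : Type*} [AddCommGroup V] [Module ℂ V]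
    (ω1 ω2 bω1 bω2 : V) (ρ A B C D : ℂ) : ExteriorAlgebra ℂ V :=
  (starRingEnd ℂ) ρ • (ι ℂ bω1 * ι ℂ bω2) + (starRingEnd ℂ) A • (ι ℂ bω1 * ι ℂ ω1) +
    (starRingEnd ℂ) B • (ι ℂ bω1 * ι ℂ ω2) + (starRingEnd ℂ) C • (ι ℂ bω2 * ι ℂ ω1) +
    (starRingEnd ℂ) D • (ι ℂ bω2 * ι ℂ ω2)

/-!
Write `Δ'` for `σ¹₁σ²₂ - σ¹₂σ²₁`. The 2-form `dτ³ = σ³₂ε ω¹∧ω̄¹ + σ³₃ dω³` is again of the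
shape `dω³`, with coefficients `σ³₃(ρ, A, B, C, D)` except that `A` is shifted by `σ³₂ε`.
`Δ₁` and `Δ₂` are quadratic in these coefficients, and the shift meets only `D`, so by `Dε = 0`
the invariants of `dτ³` in the `ω`-frame are `(σ³₃)²Δ₁` and `|σ³₃|²Δ₂`. Passing to the `τ`-frame
divides both by `|Δ'|²`, since `τ¹∧τ̄¹∧τ²∧τ̄² = |Δ'|² ω¹∧ω̄¹∧ω²∧ω̄²`. Thus `Δ₁` is multiplied by
`u = (σ³₃)²/|Δ'|²` and `Δ₂` by `|u| > 0`, which preserves the sign of `Δ₂² - |Δ₁|²` and `Δ₂/|Δ₁|`.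
-/

namespace ExteriorAlgebra

variable {R M : Type*} [CommRing R] [AddCommGroup M] [Module R M]

theorem ι_mul_ι_swap (x y : M) : ι R y * ι R x = -(ι R x * ι R y) :=
  eq_neg_of_add_eq_zero_left (ι_add_mul_swap y x)

theorem ι_mul_ι_mul_swap (x y : M) (z : ExteriorAlgebra R M) :
    ι R y * (ι R x * z) = -(ι R x * (ι R y * z)) := by
  rw [← mul_assoc, ι_mul_ι_swap, neg_mul, mul_assoc]

theorem ι_mul_ι_mul_self (x : M) (z : ExteriorAlgebra R M) : ι R x * (ι R x * z) = 0 := by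
  rw [← mul_assoc, ι_sq_zero, zero_mul]

theorem ι_smul_add_smul_mul_ι_smul_add_smul (a b c d : R) (x y : M) :
    ι R (a • x + b • y) * ι R (c • x + d • y) = (a * d - b * c) • (ι R x * ι R y) := by
  simp only [map_add, map_smul, add_mul, mul_add, smul_mul_smul_comm, ι_sq_zero, ι_mul_ι_swap x y]
  module

theorem ι_mul_ι_mul_ι_mul_ι_swap (a b c d : M) :
    ι R a * ι R b * ι R c * ι R d = -(ι R a * ι R c * (ι R b * ι R d)) := by
  simp only [mul_assoc]
  rw [ι_mul_ι_mul_swap c b, mul_neg]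

theorem ι_mul_ι_mul_ι_mul_ι_smul_add_smul (a b c d p q r s : R) (x y u v : M) :
    ι R (a • x + b • y) * ι R (p • u + q • v) * ι R (c • x + d • y) * ι R (r • u + s • v) =
      ((a * d - b * c) * (p * s - q * r)) • (ι R x * ι R u * ι R y * ι R v) := by
  rw [ι_mul_ι_mul_ι_mul_ι_swap, ι_smul_add_smul_mul_ι_smul_add_smul,
    ι_smul_add_smul_mul_ι_smul_add_smul, ι_mul_ι_mul_ι_mul_ι_swap x u y v, smul_mul_smul_comm,
    smul_neg]

end ExteriorAlgebra

open ComplexConjugate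

section StructureEquations

variable {V : Type*} [AddCommGroup V] [Module ℂ V] (ω1 ω2 bω1 bω2 : V)

noncomputable def volumeForm : ExteriorAlgebra ℂ V := ι ℂ ω1 * ι ℂ bω1 * ι ℂ ω2 * ι ℂ bω2

def delta1 (A B C D : ℂ) : ℂ := A * D - B * C

noncomputable def delta2 (ρ A B C D : ℂ) : ℝ :=
  (Complex.normSq B + Complex.normSq C - (A * conj D + conj A * D).re - Complex.normSq ρ) / 2

variable (ρ A B C D : ℂ)

theorem dOmega3_mul_self :
    dOmega3 ω1 ω2 bω1 bω2 ρ A B C D * dOmega3 ω1 ω2 bω1 bω2 ρ A B C D =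
      (2 * delta1 A B C D) • volumeForm ω1 ω2 bω1 bω2 := by
  -- sort every wedge monomial into the order `ω1, ω2, bω1, bω2`
  simp only [dOmega3, volumeForm, delta1, add_mul, mul_add, smul_mul_smul_comm, mul_assoc,
    ι_mul_ι_swap ω2 bω1, ι_mul_ι_swap ω2 bω2, ι_mul_ι_swap bω1 bω2,
    ι_mul_ι_mul_swap ω1 ω2, ι_mul_ι_mul_swap ω1 bω1, ι_mul_ι_mul_swap ω1 bω2,
    ι_mul_ι_mul_swap ω2 bω1, ι_mul_ι_mul_swap ω2 bω2,
    ι_sq_zero, ι_mul_ι_mul_self, mul_neg, neg_mul, neg_neg, mul_zero, smul_zero, neg_zero,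
    add_zero, zero_add]
  module

theorem two_mul_delta2_ofReal :
    2 * (delta2 ρ A B C D : ℂ) =
      B * conj B + C * conj C - (A * conj D + conj A * D) - ρ * conj ρ := by
  have hre : ((A * conj D + conj A * D).re : ℂ) = A * conj D + conj A * D :=
    Complex.conj_eq_iff_re.mp (by simp only [map_add, map_mul, Complex.conj_conj]; ring)
  rw [delta2, Complex.ofReal_div, Complex.ofReal_ofNat, mul_div_cancel₀ _ two_ne_zero]
  push_cast [hre]
  simp only [Complex.mul_conj]

theorem dOmega3_mul_dOmegaBar3 :
    dOmega3 ω1 ω2 bω1 bω2 ρ A B C D * dOmegaBar3 ω1 ω2 bω1 bω2 ρ A B C D =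
      (2 * (delta2 ρ A B C D : ℂ)) • volumeForm ω1 ω2 bω1 bω2 := by
  rw [two_mul_delta2_ofReal]
  simp only [dOmega3, dOmegaBar3, volumeForm, add_mul, mul_add, smul_mul_smul_comm, mul_assoc,
    ι_mul_ι_swap ω1 bω1, ι_mul_ι_swap ω1 bω2, ι_mul_ι_swap ω2 bω1,
    ι_mul_ι_swap ω2 bω2, ι_mul_ι_swap bω1 bω2,
    ι_mul_ι_mul_swap ω1 ω2, ι_mul_ι_mul_swap ω1 bω1, ι_mul_ι_mul_swap ω1 bω2,
    ι_mul_ι_mul_swap ω2 bω1, ι_mul_ι_mul_swap ω2 bω2, ι_mul_ι_mul_swap bω1 bω2,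
    ι_sq_zero, ι_mul_ι_mul_self, mul_neg, neg_mul, neg_neg, mul_zero, smul_zero, neg_zero,
    add_zero, zero_add]
  module

theorem smul_add_smul_dOmega3 (a s : ℂ) :
    a • (ι ℂ ω1 * ι ℂ bω1) + s • dOmega3 ω1 ω2 bω1 bω2 ρ A B C D =
      dOmega3 ω1 ω2 bω1 bω2 (s * ρ) (s * A + a) (s * B) (s * C) (s * D) := by
  simp only [dOmega3]
  module

theorem smul_add_smul_dOmegaBar3 (a s : ℂ) :
    conj a • (ι ℂ bω1 * ι ℂ ω1) + conj s • dOmegaBar3 ω1 ω2 bω1 bω2 ρ A B C D =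
      dOmegaBar3 ω1 ω2 bω1 bω2 (s * ρ) (s * A + a) (s * B) (s * C) (s * D) := by
  simp only [dOmegaBar3, map_add, map_mul]
  module

theorem frame_wedge_eq_normSq_det_smul_volumeForm (s11 s12 s21 s22 : ℂ) :
    ι ℂ (s11 • ω1 + s12 • ω2) * ι ℂ (conj s11 • bω1 + conj s12 • bω2) *
        ι ℂ (s21 • ω1 + s22 • ω2) * ι ℂ (conj s21 • bω1 + conj s22 • bω2) =
      (Complex.normSq (s11 * s22 - s12 * s21) : ℂ) • volumeForm ω1 ω2 bω1 bω2 := by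
  rw [ι_mul_ι_mul_ι_mul_ι_smul_add_smul, ← map_mul, ← map_mul, ← map_sub, Complex.mul_conj]
  rfl

end StructureEquations

section CoefficientChange

variable {ρ A B C D ε : ℂ}

theorem delta1_of_mul_eq_zero (h : D * ε = 0) (a s : ℂ) :
    delta1 (s * A + a * ε) (s * B) (s * C) (s * D) = s ^ 2 * delta1 A B C D := by
  unfold delta1
  linear_combination (s * a) * h

theorem delta2_of_mul_eq_zero (h : D * ε = 0) (a s : ℂ) :
    delta2 (s * ρ) (s * A + a * ε) (s * B) (s * C) (s * D) =
      Complex.normSq s * delta2 ρ A B C D := by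
  have h' : conj ε * D = 0 ∧ ε * conj D = 0 := by
    rcases mul_eq_zero.mp h with rfl | rfl <;> simp
  apply Complex.ofReal_injective
  apply mul_left_cancel₀ (two_ne_zero (α := ℂ))
  push_cast
  rw [mul_left_comm, two_mul_delta2_ofReal, two_mul_delta2_ofReal, ← Complex.mul_conj]
  simp only [map_add, map_mul]
  linear_combination (-(conj s * a)) * h'.2 - (s * conj a) * h'.1

end CoefficientChange

theorem sq_mul_norm_sub_normSq_mul (Δ₂ : ℝ) (Δ₁ u : ℂ) :
    (Δ₂ * ‖u‖) ^ 2 - Complex.normSq (Δ₁ * u) = (Δ₂ ^ 2 - Complex.normSq Δ₁) * ‖u‖ ^ 2 := by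
  rw [Complex.normSq_mul, ← Complex.sq_norm u]
  ring

theorem delta_invariants_of_rescale (Δ₂ : ℝ) (Δ₁ : ℂ) {u : ℂ} (hu : u ≠ 0) :
    (0 < (Δ₂ * ‖u‖) ^ 2 - Complex.normSq (Δ₁ * u) ↔ 0 < Δ₂ ^ 2 - Complex.normSq Δ₁) ∧
    ((Δ₂ * ‖u‖) ^ 2 - Complex.normSq (Δ₁ * u) = 0 ↔ Δ₂ ^ 2 - Complex.normSq Δ₁ = 0) ∧
    Δ₂ * ‖u‖ / ‖Δ₁ * u‖ = Δ₂ / ‖Δ₁‖ := by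
  have hu' : 0 < ‖u‖ := norm_pos_iff.mpr hu
  rw [sq_mul_norm_sub_normSq_mul, norm_mul]
  exact ⟨mul_pos_iff_of_pos_right (by positivity), mul_eq_zero_iff_right (by positivity),
    mul_div_mul_right _ _ hu'.ne'⟩

theorem delta_transformation_law_general {V : Type*} [AddCommGroup V] [Module ℂ V]
    (ω1 ω2 bω1 bω2 : V)
    (ε ρ A B C D : ℂ) (hDe : D * ε = 0)
    (s11 s12 s21 s22 s32 s33 : ℂ)
    (hdet' : s11 * s22 - s12 * s21 ≠ 0) (hs33 : s33 ≠ 0) :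
    -- defining equations for `Δ₁(τ)` and `Δ₂(τ)`
    ((s32 • (ε • (ι ℂ ω1 * ι ℂ bω1)) + s33 • dOmega3 ω1 ω2 bω1 bω2 ρ A B C D) *
        (s32 • (ε • (ι ℂ ω1 * ι ℂ bω1)) + s33 • dOmega3 ω1 ω2 bω1 bω2 ρ A B C D) =
      (2 * ((A * D - B * C) * s33 ^ 2 / ((Complex.normSq (s11 * s22 - s12 * s21) : ℂ)))) •
        (ι ℂ (s11 • ω1 + s12 • ω2) * ι ℂ ((starRingEnd ℂ) s11 • bω1 + (starRingEnd ℂ) s12 • bω2) *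
          ι ℂ (s21 • ω1 + s22 • ω2) *
          ι ℂ ((starRingEnd ℂ) s21 • bω1 + (starRingEnd ℂ) s22 • bω2))) ∧
    ((s32 • (ε • (ι ℂ ω1 * ι ℂ bω1)) + s33 • dOmega3 ω1 ω2 bω1 bω2 ρ A B C D) *
        ((starRingEnd ℂ) s32 • ((starRingEnd ℂ) ε • (ι ℂ bω1 * ι ℂ ω1)) +
          (starRingEnd ℂ) s33 • dOmegaBar3 ω1 ω2 bω1 bω2 ρ A B C D) =
      (2 * ((((Complex.normSq B + Complex.normSq C -
            (A * (starRingEnd ℂ) D + (starRingEnd ℂ) A * D).re - Complex.normSq ρ) / 2 : ℝ) : ℂ) *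
          (s33 * (starRingEnd ℂ) s33) / ((Complex.normSq (s11 * s22 - s12 * s21) : ℂ)))) •
        (ι ℂ (s11 • ω1 + s12 • ω2) * ι ℂ ((starRingEnd ℂ) s11 • bω1 + (starRingEnd ℂ) s12 • bω2) *
          ι ℂ (s21 • ω1 + s22 • ω2) *
          ι ℂ ((starRingEnd ℂ) s21 • bω1 + (starRingEnd ℂ) s22 • bω2))) ∧
    -- invariance of the sign of `Δ₂² - |Δ₁|²`
    (∀ Δ₂r Δ₂τ : ℝ, ∀ Δ₁τ : ℂ,
      Δ₂r = (Complex.normSq B + Complex.normSq C -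
          (A * (starRingEnd ℂ) D + (starRingEnd ℂ) A * D).re - Complex.normSq ρ) / 2 →
      Δ₁τ = (A * D - B * C) * s33 ^ 2 / ((Complex.normSq (s11 * s22 - s12 * s21) : ℂ)) →
      Δ₂τ = Δ₂r * Complex.normSq s33 / Complex.normSq (s11 * s22 - s12 * s21) →
      ((0 < Δ₂τ ^ 2 - Complex.normSq Δ₁τ ↔ 0 < Δ₂r ^ 2 - Complex.normSq (A * D - B * C)) ∧
       (Δ₂τ ^ 2 - Complex.normSq Δ₁τ = 0 ↔ Δ₂r ^ 2 - Complex.normSq (A * D - B * C) = 0) ∧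
       (A * D - B * C ≠ 0 →
         Δ₂τ / ‖Δ₁τ‖ = Δ₂r / ‖A * D - B * C‖))) := by
  have hn : (Complex.normSq (s11 * s22 - s12 * s21) : ℂ) ≠ 0 :=
    Complex.ofReal_ne_zero.mpr (Complex.normSq_pos.mpr hdet').ne'
  refine ⟨?_, ?_, ?_⟩
  · rw [smul_smul, smul_add_smul_dOmega3, dOmega3_mul_self, delta1_of_mul_eq_zero hDe,
      frame_wedge_eq_normSq_det_smul_volumeForm, smul_smul, delta1]
    congr 1
    field_simp
  · rw [smul_smul, smul_smul, ← map_mul (starRingEnd ℂ), smul_add_smul_dOmega3,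
      smul_add_smul_dOmegaBar3, dOmega3_mul_dOmegaBar3, delta2_of_mul_eq_zero hDe,
      frame_wedge_eq_normSq_det_smul_volumeForm, smul_smul, Complex.mul_conj, delta2]
    congr 1
    push_cast
    field_simp
  · rintro Δ₂r Δ₂τ Δ₁τ rfl rfl rfl
    set u := s33 ^ 2 / (Complex.normSq (s11 * s22 - s12 * s21) : ℂ)
    have hu : u ≠ 0 := div_ne_zero (pow_ne_zero 2 hs33) hn
    have hnorm : ‖u‖ = Complex.normSq s33 / Complex.normSq (s11 * s22 - s12 * s21) := by
      rw [norm_div, norm_pow, Complex.sq_norm, Complex.norm_real, Real.norm_of_nonneg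
        (Complex.normSq_nonneg _)]
    obtain ⟨hpos, hzero, hratio⟩ :=
      delta_invariants_of_rescale (delta2 ρ A B C D) (delta1 A B C D) hu
    rw [hnorm, ← mul_div_assoc, ← mul_div_assoc] at hpos hzero hratio
    exact ⟨hpos, hzero, fun _ => hratio⟩

/-- Under an automorphism `σ` of the nilpotent complex structure,
`τ¹ = σ¹₁ω¹ + σ¹₂ω²`, `τ² = σ²₁ω¹ + σ²₂ω²`, `τ³ = σ³₁ω¹ + σ³₂ω² + σ³₃ω³`
(with `εσ¹₂ = 0`), the invariants `Δ₁, Δ₂`, defined by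
`dτ³∧dτ³ = 2Δ₁(τ) τ¹∧τ̄¹∧τ²∧τ̄²` and `dτ³∧dτ̄³ = 2Δ₂(τ) τ¹∧τ̄¹∧τ²∧τ̄²`, transform by
`Δ₁(τ)·|Δ'|² = Δ₁(ω)·(σ³₃)²` and `Δ₂(τ)·|Δ'|² = Δ₂(ω)·|σ³₃|²`, where
`τ¹∧τ² = Δ'·ω¹∧ω²` and `det σ = σ³₃Δ'`.  Consequently the sign of `Δ₂² - |Δ₁|²` is
invariant, and `Δ₂/|Δ₁|` is invariant whenever `Δ₁ ≠ 0`. -/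
theorem delta_transformation_law {V : Type*} [AddCommGroup V] [Module ℂ V]
    (ω1 ω2 bω1 bω2 : V) (hli : LinearIndependent ℂ ![ω1, ω2, bω1, bω2])
    (ε ρ A B C D : ℂ) (hDe : D * ε = 0)
    (s11 s12 s21 s22 s31 s32 s33 : ℂ) (hεσ : ε * s12 = 0)
    (hdet' : s11 * s22 - s12 * s21 ≠ 0) (hs33 : s33 ≠ 0) :
    -- defining equations for `Δ₁(τ)` and `Δ₂(τ)`
    ((s32 • (ε • (ι ℂ ω1 * ι ℂ bω1)) + s33 • dOmega3 ω1 ω2 bω1 bω2 ρ A B C D) *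
        (s32 • (ε • (ι ℂ ω1 * ι ℂ bω1)) + s33 • dOmega3 ω1 ω2 bω1 bω2 ρ A B C D) =
      (2 * ((A * D - B * C) * s33 ^ 2 / ((Complex.normSq (s11 * s22 - s12 * s21) : ℂ)))) •
        (ι ℂ (s11 • ω1 + s12 • ω2) * ι ℂ ((starRingEnd ℂ) s11 • bω1 + (starRingEnd ℂ) s12 • bω2) *
          ι ℂ (s21 • ω1 + s22 • ω2) *
          ι ℂ ((starRingEnd ℂ) s21 • bω1 + (starRingEnd ℂ) s22 • bω2))) ∧
    ((s32 • (ε • (ι ℂ ω1 * ι ℂ bω1)) + s33 • dOmega3 ω1 ω2 bω1 bω2 ρ A B C D) *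
        ((starRingEnd ℂ) s32 • ((starRingEnd ℂ) ε • (ι ℂ bω1 * ι ℂ ω1)) +
          (starRingEnd ℂ) s33 • dOmegaBar3 ω1 ω2 bω1 bω2 ρ A B C D) =
      (2 * ((((Complex.normSq B + Complex.normSq C -
            (A * (starRingEnd ℂ) D + (starRingEnd ℂ) A * D).re - Complex.normSq ρ) / 2 : ℝ) : ℂ) *
          (s33 * (starRingEnd ℂ) s33) / ((Complex.normSq (s11 * s22 - s12 * s21) : ℂ)))) •
        (ι ℂ (s11 • ω1 + s12 • ω2) * ι ℂ ((starRingEnd ℂ) s11 • bω1 + (starRingEnd ℂ) s12 • bω2) *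
          ι ℂ (s21 • ω1 + s22 • ω2) *
          ι ℂ ((starRingEnd ℂ) s21 • bω1 + (starRingEnd ℂ) s22 • bω2))) ∧
    -- invariance of the sign of `Δ₂² - |Δ₁|²`
    (∀ Δ₂r Δ₂τ : ℝ, ∀ Δ₁τ : ℂ,
      Δ₂r = (Complex.normSq B + Complex.normSq C -
          (A * (starRingEnd ℂ) D + (starRingEnd ℂ) A * D).re - Complex.normSq ρ) / 2 →
      Δ₁τ = (A * D - B * C) * s33 ^ 2 / ((Complex.normSq (s11 * s22 - s12 * s21) : ℂ)) →
      Δ₂τ = Δ₂r * Complex.normSq s33 / Complex.normSq (s11 * s22 - s12 * s21) →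
      ((0 < Δ₂τ ^ 2 - Complex.normSq Δ₁τ ↔ 0 < Δ₂r ^ 2 - Complex.normSq (A * D - B * C)) ∧
       (Δ₂τ ^ 2 - Complex.normSq Δ₁τ = 0 ↔ Δ₂r ^ 2 - Complex.normSq (A * D - B * C) = 0) ∧
       (A * D - B * C ≠ 0 →
         Δ₂τ / ‖Δ₁τ‖ = Δ₂r / ‖A * D - B * C‖))) :=
  delta_transformation_law_general ω1 ω2 bω1 bω2 ε ρ A B C D hDe s11 s12 s21 s22 s32 s33 hdet' hs33
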